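/- The translation of the kernel value substitution calculus into the value sequent calculus maps multiplicative steps to λ̄-steps and exponential steps to μ̃-steps: for kernel vsub-terms t, u, if t →m u then t° →λ̄ u°, and if t →e u then t° →μ̃ u°. -/
import Mathlib


/-- Terms of the value substitution calculus, in de Bruijn notation:
variables, abstractions, applications and explicit substitutions
(`sub t u` is `t[x←u]`, binding de Bruijn index 0 of `t`). -/
inductive VTm : Type
  | var : Nat → VTm
  | lam : VTm → VTm
  | app : VTm → VTm → VTm
  | sub : VTm → VTm → VTm

namespace VTm

/-- Shift (by one) the free de Bruijn indices `≥ k`. -/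
def shift (k : Nat) : VTm → VTm
  | var n => if k ≤ n then var (n+1) else var n
  | lam t => lam (shift (k+1) t)
  | app t u => app (shift k t) (shift k u)
  | sub t u => sub (shift (k+1) t) (shift k u)

/-- Capture-avoiding (meta-level) substitution of `u` for variable `k`. -/
def subst : VTm → Nat → VTm → VTm
  | var n, k, u => if n = k then u else if k < n then var (n-1) else var n
  | lam t, k, u => lam (subst t (k+1) (shift 0 u))
  | app t s, k, u => app (subst t k u) (subst s k u)
  | sub t s, k, u => sub (subst t (k+1) (shift 0 u)) (subst s k u)

/-- vsub-values: variables and abstractions. -/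
inductive IsVal : VTm → Prop
  | var : IsVal (var n)
  | lam : IsVal (lam t)

/-- Multiplicative root rule `L⟨λx.t⟩u ↦m L⟨t[x←u]⟩` (the recursion on the
substitution context `L` performs the de Bruijn shifts corresponding to the
side condition that the variables bound by `L` do not occur free in `u`). -/
inductive RootM : VTm → VTm → Prop
  | beta : RootM (app (lam t) u) (sub t u)
  | under : RootM (app t (shift 0 u)) s → RootM (app (sub t r) u) (sub s r)

/-- Exponential root rule `t[x←L⟨v⟩] ↦e L⟨t{x:=v}⟩` for an abstraction `v`. -/
inductive RootEAbs : VTm → VTm → Prop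
  | beta : RootEAbs (sub t (lam u)) (subst t 0 (lam u))
  | under : RootEAbs (sub (shift 1 t) b) s → RootEAbs (sub t (sub b r)) (sub s r)

/-- Exponential root rule `t[x←L⟨v⟩] ↦e L⟨t{x:=v}⟩` for a variable `v`. -/
inductive RootEVar : VTm → VTm → Prop
  | beta : RootEVar (sub t (var n)) (subst t 0 (var n))
  | under : RootEVar (sub (shift 1 t) b) s → RootEVar (sub t (sub b r)) (sub s r)

/-- Closure of a root rule under the weak evaluation contexts
`E ::= ⟨·⟩ | t E | E t | E[x←u] | t[x←E]`. -/
inductive Clo (R : VTm → VTm → Prop) : VTm → VTm → Prop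
  | root : R t u → Clo R t u
  | appL : Clo R t t' → Clo R (app t u) (app t' u)
  | appR : Clo R u u' → Clo R (app t u) (app t u')
  | subL : Clo R t t' → Clo R (sub t u) (sub t' u)
  | subR : Clo R u u' → Clo R (sub t u) (sub t u')

/-- Multiplicative reduction `→m`. -/
def StepM : VTm → VTm → Prop := Clo RootM
/-- Abstraction-exponential reduction `→eλ`. -/
def StepEAbs : VTm → VTm → Prop := Clo RootEAbs
/-- Variable-exponential reduction `→evar`. -/
def StepEVar : VTm → VTm → Prop := Clo RootEVar
/-- Exponential reduction `→e = →eλ ∪ →evar`. -/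
def StepE (t u : VTm) : Prop := StepEAbs t u ∨ StepEVar t u
/-- vsub-reduction `→vsub = →m ∪ →e`. -/
def StepVsub (t u : VTm) : Prop := StepM t u ∨ StepE t u

/-- Swap the de Bruijn indices `k` and `k+1`. -/
def swap (k : Nat) : VTm → VTm
  | var n => if n = k then var (k+1) else if n = k+1 then var k else var n
  | lam t => lam (swap (k+1) t)
  | app t u => app (swap k t) (swap k u)
  | sub t u => sub (swap (k+1) t) (swap k u)

/-- Structural equivalence `≡`: least equivalence relation closed under
evaluation contexts generated by the four permutation axioms for explicit
substitutions (the de Bruijn shifts/swaps implement the freshness side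
conditions). -/
inductive SEq : VTm → VTm → Prop
  | com : SEq (sub (sub t (shift 0 s)) u) (sub (sub (swap 0 t) (shift 0 u)) s)
  | apR : SEq (app t (sub s u)) (sub (app (shift 0 t) s) u)
  | apL : SEq (app (sub t u) s) (sub (app t (shift 0 s)) u)
  | es  : SEq (sub t (sub u s)) (sub (sub (shift 1 t) u) s)
  | refl : SEq t t
  | symm : SEq t u → SEq u t
  | toSeq : SEq t u → SEq u s → SEq t s
  | appL : SEq t t' → SEq (app t u) (app t' u)
  | appR : SEq u u' → SEq (app t u) (app t u')
  | subL : SEq t t' → SEq (sub t u) (sub t' u)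
  | subR : SEq u u' → SEq (sub t u) (sub t u')

/-- Terms without explicit substitutions. -/
def NoES : VTm → Prop
  | var _ => True
  | lam t => NoES t
  | app t u => NoES t ∧ NoES u
  | sub _ _ => False

end VTm

mutual
/-- Commands of the value sequent calculus: `c ::= ⟨v | e⟩`. -/
inductive Cmd : Type
  | mk : Val → Env → Cmd
/-- Values: `v ::= x | λx.c` (de Bruijn notation). -/
inductive Val : Type
  | var : Nat → Val
  | lam : Cmd → Val
/-- Environments: `e ::= ε | μ̃x.c | v·e`. -/
inductive Env : Type
  | nil : Env
  | mut : Cmd → Env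
  | cons : Val → Env → Env
end

mutual
/-- Shift the free de Bruijn indices `≥ k` of a command. -/
def shiftC (k : Nat) : Cmd → Cmd
  | .mk v e => .mk (shiftV k v) (shiftE k e)
/-- Shift the free de Bruijn indices `≥ k` of a value. -/
def shiftV (k : Nat) : Val → Val
  | .var n => if k ≤ n then .var (n+1) else .var n
  | .lam c => .lam (shiftC (k+1) c)
/-- Shift the free de Bruijn indices `≥ k` of an environment. -/
def shiftE (k : Nat) : Env → Env
  | .nil => .nil
  | .mut c => .mut (shiftC (k+1) c)
  | .cons v e => .cons (shiftV k v) (shiftE k e)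
end

mutual
/-- Capture-avoiding substitution `c{k := w}`. -/
def substC : Cmd → Nat → Val → Cmd
  | .mk v e, k, w => .mk (substV v k w) (substE e k w)
/-- Capture-avoiding substitution on values. -/
def substV : Val → Nat → Val → Val
  | .var n, k, w => if n = k then w else if k < n then .var (n-1) else .var n
  | .lam c, k, w => .lam (substC c (k+1) (shiftV 0 w))
/-- Capture-avoiding substitution on environments. -/
def substE : Env → Nat → Val → Env
  | .nil, _, _ => .nil
  | .mut c, k, w => .mut (substC c (k+1) (shiftV 0 w))
  | .cons v e, k, w => .cons (substV v k w) (substE e k w)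
end

mutual
/-- Appending `c@e`: substitute `e` for the unique toplevel occurrence
of `ε` in `c`. -/
def appC : Cmd → Env → Cmd
  | .mk v e', e => .mk v (appE e' e)
/-- Appending `e'@e` on environments. -/
def appE : Env → Env → Env
  | .nil, e => e
  | .mut c, e => .mut (appC c (shiftE 0 e))
  | .cons v e', e => .cons v (appE e' e)
end

mutual
/-- λ̄-steps on commands: root rule `⟨λx.c | v·e⟩ ↦λ̄ ⟨v | (μ̃x.c)@e⟩`,
closed under the command evaluation contexts `C ::= ⟨·⟩ | D⟨μ̃x.C⟩`
with `D ::= ⟨v|⟨·⟩⟩ | D⟨v·⟨·⟩⟩`. -/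
inductive StepLC : Cmd → Cmd → Prop
  | root : StepLC (.mk (.lam c) (.cons v e)) (.mk v (appE (.mut c) e))
  | env : StepLE e e' → StepLC (.mk v e) (.mk v e')
/-- λ̄-steps on environments. -/
inductive StepLE : Env → Env → Prop
  | mut : StepLC c c' → StepLE (.mut c) (.mut c')
  | cons : StepLE e e' → StepLE (.cons v e) (.cons v e')
end

mutual
/-- μ̃-steps on commands: root rule `⟨v | μ̃x.c⟩ ↦μ̃ c{x:=v}`, closed under
command evaluation contexts. -/
inductive StepMuC : Cmd → Cmd → Prop
  | root : StepMuC (.mk v (.mut c)) (substC c 0 v)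
  | env : StepMuE e e' → StepMuC (.mk v e) (.mk v e')
/-- μ̃-steps on environments. -/
inductive StepMuE : Env → Env → Prop
  | mut : StepMuC c c' → StepMuE (.mut c) (.mut c')
  | cons : StepMuE e e' → StepMuE (.cons v e) (.cons v e')
end

/-- vseq-reduction `→vseq = →λ̄ ∪ →μ̃`. -/
def StepVseq (c c' : Cmd) : Prop := StepLC c c' ∨ StepMuC c c'

open VTm

/-- Combined exponential root rule `t[x←L⟨v⟩] ↦e L⟨t{x:=v}⟩` (`v` a value). -/
inductive RootE : VTm → VTm → Prop
  | beta : IsVal v → RootE (.sub t v) (subst t 0 v)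
  | under : RootE (.sub (shift 1 t) b) s → RootE (.sub t (.sub b r)) (.sub s r)

/-- Kernel vsub-terms (administrative normal forms):
`t ::= v | t v | t[x←u]` with values `v ::= x | λx.t`. -/
inductive Kernel : VTm → Prop
  | var : Kernel (.var n)
  | lam : Kernel t → Kernel (.lam t)
  | app : Kernel t → IsVal v → Kernel v → Kernel (.app t v)
  | sub : Kernel t → Kernel u → Kernel (.sub t u)

/-- Closure of a root rule under the kernel evaluation contexts
`E ::= ⟨·⟩ | E v | E[x←u] | t[x←E]`. -/
inductive KClo (R : VTm → VTm → Prop) : VTm → VTm → Prop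
  | root : R t u → KClo R t u
  | appL : KClo R t t' → IsVal v → KClo R (.app t v) (.app t' v)
  | subL : KClo R t t' → KClo R (.sub t u) (.sub t' u)
  | subR : KClo R u u' → KClo R (.sub t u) (.sub t u')

/-- Kernel multiplicative reduction. -/
def KStepM : VTm → VTm → Prop := KClo RootM
/-- Kernel exponential reduction. -/
def KStepE : VTm → VTm → Prop := KClo RootE

mutual
/-- Translation of (kernel) vsub-values to sequent-calculus values. -/
def toSeqV : VTm → Val
  | .var n => .var n
  | .lam t => .lam (toSeq t)
  | .app _ _ => .var 0
  | .sub _ _ => .var 0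
/-- Translation `(·)°` of kernel vsub-terms to commands:
`v° = ⟨v°ᵥ | ε⟩`, `(t v)° = t° @ (v°ᵥ · ε)`, `(t[x←u])° = u° @ μ̃x.t°`. -/
def toSeq : VTm → Cmd
  | .var n => .mk (.var n) .nil
  | .lam t => .mk (.lam (toSeq t)) .nil
  | .app t u => appC (toSeq t) (.cons (toSeqV u) .nil)
  | .sub t u => appC (toSeq u) (.mut (toSeq t))
end

mutual
theorem shiftC_comm (j k : Nat) (h : j ≤ k) (c : Cmd) :
    shiftC j (shiftC k c) = shiftC (k+1) (shiftC j c) :=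
  match c with
  | .mk v e => by simp [shiftC, shiftV_comm j k h v, shiftE_comm j k h e]
theorem shiftV_comm (j k : Nat) (h : j ≤ k) (v : Val) :
    shiftV j (shiftV k v) = shiftV (k+1) (shiftV j v) :=
  match v with
  | .var n => by
      simp only [shiftV]
      split_ifs <;> simp only [shiftV] <;> split_ifs <;>
        first | rfl | omega | (exfalso; omega) | (simp only [Val.var.injEq]; omega)
  | .lam c => by simp [shiftV, shiftC_comm (j+1) (k+1) (by omega) c]
theorem shiftE_comm (j k : Nat) (h : j ≤ k) (e : Env) :
    shiftE j (shiftE k e) = shiftE (k+1) (shiftE j e) :=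
  match e with
  | .nil => rfl
  | .mut c => by simp [shiftE, shiftC_comm (j+1) (k+1) (by omega) c]
  | .cons v e => by simp [shiftE, shiftV_comm j k h v, shiftE_comm j k h e]
end

mutual
theorem appC_shift (k : Nat) (c : Cmd) (e : Env) :
    shiftC k (appC c e) = appC (shiftC k c) (shiftE k e) :=
  match c with
  | .mk v e' => by simp [shiftC, appC, appE_shift k e' e]
theorem appE_shift (k : Nat) (a b : Env) :
    shiftE k (appE a b) = appE (shiftE k a) (shiftE k b) :=
  match a with
  | .nil => rfl
  | .mut c => by
      simp [shiftE, appE, appC_shift (k+1) c, shiftE_comm 0 k (by omega) b]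
  | .cons v e => by simp [shiftE, appE, appE_shift k e b]
end

mutual
theorem appC_nil (c : Cmd) : appC c .nil = c :=
  match c with
  | .mk v e => by simp [appC, appE_nil e]
theorem appE_nil (e : Env) : appE e .nil = e :=
  match e with
  | .nil => rfl
  | .mut c => by show Env.mut (appC c (shiftE 0 .nil)) = _; simp [shiftE, appC_nil c]
  | .cons v e => by simp [appE, appE_nil e]
end

mutual
theorem appC_assoc (c : Cmd) (a b : Env) :
    appC (appC c a) b = appC c (appE a b) :=
  match c with
  | .mk v e => by simp [appC, appE_assoc e a b]
theorem appE_assoc (a b c : Env) :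
    appE (appE a b) c = appE a (appE b c) :=
  match a with
  | .nil => rfl
  | .mut d => by simp [appE, appC_assoc d (shiftE 0 b) (shiftE 0 c), appE_shift 0 b c]
  | .cons v e => by simp [appE, appE_assoc e b c]
end
set_option linter.unreachableTactic false
set_option linter.unusedTactic false

mutual
/-- shift below subst: j ≤ k -/
theorem substC_shift_le (j k : Nat) (h : j ≤ k) (c : Cmd) (w : Val) :
    substC (shiftC j c) (k+1) (shiftV j w) = shiftC j (substC c k w) :=
  match c with
  | .mk v e => by simp [substC, shiftC, substV_shift_le j k h v w, substE_shift_le j k h e w]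
theorem substV_shift_le (j k : Nat) (h : j ≤ k) (v : Val) (w : Val) :
    substV (shiftV j v) (k+1) (shiftV j w) = shiftV j (substV v k w) :=
  match v with
  | .var n => by
      simp only [shiftV]
      split_ifs <;> simp only [substV] <;> (try split_ifs) <;> (try simp only [shiftV]) <;> (try split_ifs) <;>
        first | rfl | omega | (exfalso; omega) | (simp only [Val.var.injEq]; omega)
  | .lam c => by
      simp only [shiftV, substV, Val.lam.injEq]
      rw [shiftV_comm 0 j (by omega) w]
      exact substC_shift_le (j+1) (k+1) (by omega) c (shiftV 0 w)
theorem substE_shift_le (j k : Nat) (h : j ≤ k) (e : Env) (w : Val) :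
    substE (shiftE j e) (k+1) (shiftV j w) = shiftE j (substE e k w) :=
  match e with
  | .nil => rfl
  | .mut c => by
      simp only [shiftE, substE, Env.mut.injEq]
      rw [shiftV_comm 0 j (by omega) w]
      exact substC_shift_le (j+1) (k+1) (by omega) c (shiftV 0 w)
  | .cons v e => by simp [shiftE, substE, substV_shift_le j k h v w, substE_shift_le j k h e w]
end

mutual
/-- shift above subst: i ≤ k -/
theorem substC_shift_ge (i k : Nat) (h : i ≤ k) (c : Cmd) (w : Val) :
    substC (shiftC (k+1) c) i (shiftV k w) = shiftC k (substC c i w) :=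
  match c with
  | .mk v e => by simp [substC, shiftC, substV_shift_ge i k h v w, substE_shift_ge i k h e w]
theorem substV_shift_ge (i k : Nat) (h : i ≤ k) (v : Val) (w : Val) :
    substV (shiftV (k+1) v) i (shiftV k w) = shiftV k (substV v i w) :=
  match v with
  | .var n => by
      simp only [shiftV]
      split_ifs <;> simp only [substV] <;> (try split_ifs) <;> (try simp only [shiftV]) <;> (try split_ifs) <;>
        first | rfl | omega | (exfalso; omega) | (simp only [Val.var.injEq]; omega)
  | .lam c => by
      simp only [shiftV, substV, Val.lam.injEq]
      rw [shiftV_comm 0 k (by omega) w]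
      exact substC_shift_ge (i+1) (k+1) (by omega) c (shiftV 0 w)
theorem substE_shift_ge (i k : Nat) (h : i ≤ k) (e : Env) (w : Val) :
    substE (shiftE (k+1) e) i (shiftV k w) = shiftE k (substE e i w) :=
  match e with
  | .nil => rfl
  | .mut c => by
      simp only [shiftE, substE, Env.mut.injEq]
      rw [shiftV_comm 0 k (by omega) w]
      exact substC_shift_ge (i+1) (k+1) (by omega) c (shiftV 0 w)
  | .cons v e => by simp [shiftE, substE, substV_shift_ge i k h v w, substE_shift_ge i k h e w]
end

mutual
/-- substituting for a freshly shifted variable is the identity -/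
theorem substC_shift_cancel (k : Nat) (c : Cmd) (w : Val) :
    substC (shiftC k c) k w = c :=
  match c with
  | .mk v e => by simp [substC, shiftC, substV_shift_cancel k v w, substE_shift_cancel k e w]
theorem substV_shift_cancel (k : Nat) (v : Val) (w : Val) :
    substV (shiftV k v) k w = v :=
  match v with
  | .var n => by
      simp only [shiftV]
      split_ifs <;> simp only [substV] <;> split_ifs <;>
        first | rfl | omega | (exfalso; omega) | (simp only [Val.var.injEq]; omega)
  | .lam c => by simp [shiftV, substV, substC_shift_cancel (k+1) c (shiftV 0 w)]
theorem substE_shift_cancel (k : Nat) (e : Env) (w : Val) :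
    substE (shiftE k e) k w = e :=
  match e with
  | .nil => rfl
  | .mut c => by simp [shiftE, substE, substC_shift_cancel (k+1) c (shiftV 0 w)]
  | .cons v e => by simp [shiftE, substE, substV_shift_cancel k v w, substE_shift_cancel k e w]
end

mutual
theorem appC_subst (c : Cmd) (e : Env) (k : Nat) (w : Val) :
    substC (appC c e) k w = appC (substC c k w) (substE e k w) :=
  match c with
  | .mk v e' => by simp [substC, appC, appE_subst e' e k w]
theorem appE_subst (a b : Env) (k : Nat) (w : Val) :
    substE (appE a b) k w = appE (substE a k w) (substE b k w) :=
  match a with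
  | .nil => rfl
  | .mut c => by
      simp only [appE, substE, Env.mut.injEq]
      rw [appC_subst c (shiftE 0 b) (k+1) (shiftV 0 w), substE_shift_le 0 k (by omega) b w]
  | .cons v e => by simp [appE, substE, appE_subst e b k w]
end
mutual
theorem stepLC_shift (k : Nat) {c c' : Cmd} (h : StepLC c c') :
    StepLC (shiftC k c) (shiftC k c') :=
  match h with
  | .root (c := c) (v := v) (e := e) => by
      have := StepLC.root (c := shiftC (k+1) c) (v := shiftV k v) (e := shiftE k e)
      simpa [shiftC, shiftV, shiftE, appE, appC_shift, shiftE_comm 0 k (Nat.zero_le k)] using this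
  | .env he => by
      exact StepLC.env (stepLE_shift k he)
theorem stepLE_shift (k : Nat) {e e' : Env} (h : StepLE e e') :
    StepLE (shiftE k e) (shiftE k e') :=
  match h with
  | .mut hc => StepLE.mut (stepLC_shift (k+1) hc)
  | .cons he => StepLE.cons (stepLE_shift k he)
end

mutual
theorem stepMuC_shift (k : Nat) {c c' : Cmd} (h : StepMuC c c') :
    StepMuC (shiftC k c) (shiftC k c') :=
  match h with
  | .root (v := v) (c := c) => by
      have := StepMuC.root (v := shiftV k v) (c := shiftC (k+1) c)
      simpa [shiftC, shiftE, substC_shift_ge 0 k (by omega)] using this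
  | .env he => StepMuC.env (stepMuE_shift k he)
theorem stepMuE_shift (k : Nat) {e e' : Env} (h : StepMuE e e') :
    StepMuE (shiftE k e) (shiftE k e') :=
  match h with
  | .mut hc => StepMuE.mut (stepMuC_shift (k+1) hc)
  | .cons he => StepMuE.cons (stepMuE_shift k he)
end

mutual
theorem stepLC_appL {c c' : Cmd} (e : Env) (h : StepLC c c') :
    StepLC (appC c e) (appC c' e) :=
  match h with
  | .root (c := c) (v := v) (e := e0) => by
      have := StepLC.root (c := c) (v := v) (e := appE e0 e)
      simpa [appC, appE, appE_assoc, appC_assoc, appE_shift] using this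
  | .env he => StepLC.env (stepLE_appL e he)
theorem stepLE_appL {a a' : Env} (e : Env) (h : StepLE a a') :
    StepLE (appE a e) (appE a' e) :=
  match h with
  | .mut hc => StepLE.mut (stepLC_appL (shiftE 0 e) hc)
  | .cons he => StepLE.cons (stepLE_appL e he)
end

mutual
theorem stepMuC_appL {c c' : Cmd} (e : Env) (h : StepMuC c c') :
    StepMuC (appC c e) (appC c' e) :=
  match h with
  | .root (v := v) (c := c) => by
      have := StepMuC.root (v := v) (c := appC c (shiftE 0 e))
      simpa [appC, appE, appC_subst, substE_shift_cancel] using this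
  | .env he => StepMuC.env (stepMuE_appL e he)
theorem stepMuE_appL {a a' : Env} (e : Env) (h : StepMuE a a') :
    StepMuE (appE a e) (appE a' e) :=
  match h with
  | .mut hc => StepMuE.mut (stepMuC_appL (shiftE 0 e) hc)
  | .cons he => StepMuE.cons (stepMuE_appL e he)
end

mutual
theorem stepLC_appR (c : Cmd) {e e' : Env} (h : StepLE e e') :
    StepLC (appC c e) (appC c e') :=
  match c with
  | .mk v e0 => StepLC.env (stepLE_appR e0 h)
theorem stepLE_appR (a : Env) {e e' : Env} (h : StepLE e e') :
    StepLE (appE a e) (appE a e') :=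
  match a with
  | .nil => h
  | .mut c => StepLE.mut (stepLC_appR c (stepLE_shift 0 h))
  | .cons v a => StepLE.cons (stepLE_appR a h)
end

mutual
theorem stepMuC_appR (c : Cmd) {e e' : Env} (h : StepMuE e e') :
    StepMuC (appC c e) (appC c e') :=
  match c with
  | .mk v e0 => StepMuC.env (stepMuE_appR e0 h)
theorem stepMuE_appR (a : Env) {e e' : Env} (h : StepMuE e e') :
    StepMuE (appE a e) (appE a e') :=
  match a with
  | .nil => h
  | .mut c => StepMuE.mut (stepMuC_appR c (stepMuE_shift 0 h))
  | .cons v a => StepMuE.cons (stepMuE_appR a h)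
end
open VTm in
theorem isVal_shift {v : VTm} (h : IsVal v) (k : Nat) : IsVal (shift k v) := by
  cases h <;> simp only [shift] <;> (try split) <;> constructor

open VTm in
theorem isVal_subst {v : VTm} (h : IsVal v) (k : Nat) {w : VTm} (hw : IsVal w) :
    IsVal (subst v k w) := by
  cases h <;> simp only [subst] <;> (try split) <;> (try split) <;> first | exact hw | constructor

open VTm in
theorem kernel_shift {t : VTm} (h : Kernel t) (k : Nat) : Kernel (shift k t) := by
  induction h generalizing k with
  | var => simp only [shift]; split <;> constructor
  | lam _ ih => exact Kernel.lam (ih _)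
  | app _ hv _ iht ihv => exact Kernel.app (iht k) (isVal_shift hv k) (ihv k)
  | sub _ _ iht ihu => exact Kernel.sub (iht (k+1)) (ihu k)

open VTm in
theorem toSeq_val {v : VTm} (h : IsVal v) : toSeq v = Cmd.mk (toSeqV v) .nil := by
  cases h <;> rfl

open VTm in
theorem toSeq_shift {t : VTm} (h : Kernel t) (k : Nat) :
    toSeq (shift k t) = shiftC k (toSeq t) := by
  induction h generalizing k with
  | var => simp only [shift]; split <;> rename_i h <;> simp [toSeq, shiftC, shiftV, shiftE, h]
  | lam _ ih => simp [shift, toSeq, shiftC, shiftV, shiftE, ih]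
  | @app t v _ hv hkv iht ihv =>
      have hval : toSeqV (shift k v) = shiftV k (toSeqV v) := by
        have h1 := ihv k
        rw [toSeq_val (isVal_shift hv k), toSeq_val hv] at h1
        simpa [shiftC] using (Cmd.mk.injEq _ _ _ _ ▸ h1).1
      simp [shift, toSeq, iht, hval, appC_shift, shiftE, shiftV]
  | sub _ _ iht ihu =>
      simp [shift, toSeq, iht, ihu, appC_shift, shiftE]

open VTm in
theorem toSeqV_shift {v : VTm} (hv : IsVal v) (hk : Kernel v) (k : Nat) :
    toSeqV (shift k v) = shiftV k (toSeqV v) := by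
  have h1 := toSeq_shift hk k
  rw [toSeq_val (isVal_shift hv k), toSeq_val hv] at h1
  simpa [shiftC] using (Cmd.mk.injEq _ _ _ _ ▸ h1).1

open VTm in
theorem toSeq_subst {t : VTm} (ht : Kernel t) :
    ∀ (k : Nat) (v : VTm), IsVal v → Kernel v →
      toSeq (subst t k v) = substC (toSeq t) k (toSeqV v) := by
  induction ht with
  | @var n => intro k v hv hkv
              simp only [subst]
              split_ifs with h1 h2
              · simp [toSeq, substC, substV, substE, h1, toSeq_val hv]
              · simp [toSeq, substC, substV, substE, h1, h2]
              · simp [toSeq, substC, substV, substE, h1, h2]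
  | lam _ ih =>
      intro k v hv hkv
      simp [subst, toSeq, substC, substV, substE,
        ih (k+1) (shift 0 v) (isVal_shift hv 0) (kernel_shift hkv 0),
        toSeqV_shift hv hkv 0]
  | @app t s _ hs hks iht ihs =>
      intro k v hv hkv
      have hval : toSeqV (subst s k v) = substV (toSeqV s) k (toSeqV v) := by
        have h1 := ihs k v hv hkv
        rw [toSeq_val (isVal_subst hs k hv), toSeq_val hs] at h1
        simpa [substC] using (Cmd.mk.injEq _ _ _ _ ▸ h1).1
      simp [subst, toSeq, iht k v hv hkv, hval, appC_subst, substE, substV]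
  | sub _ _ iht ihu =>
      intro k v hv hkv
      simp [subst, toSeq, appC_subst, substE, ihu k v hv hkv,
        iht (k+1) (shift 0 v) (isVal_shift hv 0) (kernel_shift hkv 0),
        toSeqV_shift hv hkv 0]
open VTm in
theorem rootM_sim {t u : VTm} (ht : Kernel t) (h : RootM t u) :
    StepLC (toSeq t) (toSeq u) := by
  induction h with
  | @beta t0 u0 =>
      rcases ht with _ | _ | ⟨kt, hu, ku⟩
      have := StepLC.root (c := toSeq t0) (v := toSeqV u0) (e := Env.nil)
      simpa [toSeq, appC, appE, shiftE, appC_nil, appE_nil, toSeq_val hu] using this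
  | @under t u s r h ih =>
      rcases ht with _ | _ | ⟨ktr, hu, ku⟩
      rcases ktr with _ | _ | _ | ⟨kt, kr⟩
      have ih' := ih (Kernel.app kt (isVal_shift hu 0) (kernel_shift ku 0))
      rw [show toSeq (VTm.app t (shift 0 u)) =
          appC (toSeq t) (.cons (shiftV 0 (toSeqV u)) .nil) by
        simp [toSeq, toSeqV_shift hu ku 0]] at ih'
      have := stepLC_appR (toSeq r) (StepLE.mut ih')
      simpa [toSeq, appC_assoc, appE, shiftE] using this

open VTm in
theorem rootE_sim {t u : VTm} (ht : Kernel t) (h : RootE t u) :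
    StepMuC (toSeq t) (toSeq u) := by
  induction h with
  | @beta v t0 hv =>
      rcases ht with _ | _ | _ | ⟨kt, kv⟩
      have := StepMuC.root (v := toSeqV v) (c := toSeq t0)
      rw [toSeq_subst kt 0 v hv kv]
      simpa [toSeq, appC, appE, toSeq_val hv] using this
  | @under t b s r h ih =>
      rcases ht with _ | _ | _ | ⟨kt, kbr⟩
      rcases kbr with _ | _ | _ | ⟨kb, kr⟩
      have ih' := ih (Kernel.sub (kernel_shift kt 1) kb)
      rw [show toSeq (VTm.sub (shift 1 t) b) =
          appC (toSeq b) (.mut (shiftC 1 (toSeq t))) by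
        simp [toSeq, toSeq_shift kt 1]] at ih'
      have := stepMuC_appR (toSeq r) (StepMuE.mut ih')
      simpa [toSeq, appC_assoc, appE, shiftE] using this

open VTm in
theorem kcloM_sim {t u : VTm} (h : KClo RootM t u) :
    Kernel t → StepLC (toSeq t) (toSeq u) := by
  induction h with
  | root hr => exact fun ht => rootM_sim ht hr
  | @appL t t' v h hv ih =>
      intro ht
      rcases ht with _ | _ | ⟨kt, _, _⟩
      simpa [toSeq] using stepLC_appL _ (ih kt)
  | @subL t t' u h ih =>
      intro ht
      rcases ht with _ | _ | _ | ⟨kt, ku⟩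
      simpa [toSeq] using stepLC_appR (toSeq u) (StepLE.mut (ih kt))
  | @subR u u' t h ih =>
      intro ht
      rcases ht with _ | _ | _ | ⟨kt, ku⟩
      simpa [toSeq] using stepLC_appL (Env.mut (toSeq t)) (ih ku)

open VTm in
theorem kcloE_sim {t u : VTm} (h : KClo RootE t u) :
    Kernel t → StepMuC (toSeq t) (toSeq u) := by
  induction h with
  | root hr => exact fun ht => rootE_sim ht hr
  | @appL t t' v h hv ih =>
      intro ht
      rcases ht with _ | _ | ⟨kt, _, _⟩
      simpa [toSeq] using stepMuC_appL _ (ih kt)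
  | @subL t t' u h ih =>
      intro ht
      rcases ht with _ | _ | _ | ⟨kt, ku⟩
      simpa [toSeq] using stepMuC_appR (toSeq u) (StepMuE.mut (ih kt))
  | @subR u u' t h ih =>
      intro ht
      rcases ht with _ | _ | _ | ⟨kt, ku⟩
      simpa [toSeq] using stepMuC_appL (Env.mut (toSeq t)) (ih ku)

/-- the translation of the kernel value substitution calculus
into the value sequent calculus maps multiplicative steps to λ̄-steps and
exponential steps to μ̃-steps. -/
theorem kernel_translation_simulation (t u : VTm) (ht : Kernel t) :
    (KStepM t u → StepLC (toSeq t) (toSeq u)) ∧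
    (KStepE t u → StepMuC (toSeq t) (toSeq u)) :=
  ⟨fun h => kcloM_sim h ht, fun h => kcloE_sim h ht⟩
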